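/- Let Σ = {u = 0} be a regular surface in the Heisenberg group and γ : [a,b] → Σ a Euclidean C²-smooth regular curve through non-characteristic points. If ω(γ̇(t)) ≠ 0, then the limit as L → +∞ of the geodesic curvature k^{L,∇}_{γ,Σ}(t) associated to the first Schouten–Van Kampen affine connection exists and equals |p̄(γ(t))γ̇₁(t) + q̄(γ(t))γ̇₂(t)| / (2|ω(γ̇(t))|). -/
import Mathlib


open Filter Real Topology

set_option maxHeartbeats 2000000

lemma svk_aux (A M c₁ g0 g1 u0 u1 v0 v1 ha hb : ℝ) (hu : u0 ≠ 0) (hv : v0 ≠ 0) :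
    Filter.Tendsto (fun x : ℝ => ((A*x+M)^2 + x*(g0*x+g1)^2/(u0+u1*x)) / (v0+v1*x)^2
      - x*((A*x+M)*c₁ + (g0*x+g1)*(ha+hb*x)/(u0+u1*x))^2 / (v0+v1*x)^3)
    (nhds 0) (nhds (M^2/v0^2)) := by
  have hc : ContinuousAt (fun x : ℝ => ((A*x+M)^2 + x*(g0*x+g1)^2/(u0+u1*x)) / (v0+v1*x)^2
      - x*((A*x+M)*c₁ + (g0*x+g1)*(ha+hb*x)/(u0+u1*x))^2 / (v0+v1*x)^3) 0 := by
    apply ContinuousAt.sub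
    · apply ContinuousAt.div
      · apply ContinuousAt.add (by fun_prop)
        apply ContinuousAt.mul (by fun_prop)
        apply ContinuousAt.inv₀ (by fun_prop)
        simpa using hu
      · fun_prop
      · simpa using pow_ne_zero 2 hv
    · apply ContinuousAt.div
      · apply ContinuousAt.mul (by fun_prop)
        apply ContinuousAt.pow
        apply ContinuousAt.add (by fun_prop)
        apply ContinuousAt.mul (by fun_prop)
        apply ContinuousAt.inv₀ (by fun_prop)
        simpa using hu
      · fun_prop
      · simpa using pow_ne_zero 3 hv
  have := hc.tendsto
  convert this using 2
  simp

theorem geodesic_curvature_limit_first_SvK_nonhorizontal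
    (u : ℝ → ℝ → ℝ → ℝ)
    (γ₁ γ₂ γ₃ ω p q uz lf pbar qbar c1 : ℝ → ℝ)
    (rr lL rbar c2 aa bb k : ℝ → ℝ → ℝ)
    (a b t : ℝ) (ht : t ∈ Set.Icc a b)
    (hu : ContDiff ℝ 2 (fun v : ℝ × ℝ × ℝ => u v.1 v.2.1 v.2.2))
    (hγ : ContDiffOn ℝ 2 (fun s => (γ₁ s, γ₂ s, γ₃ s)) (Set.Icc a b))
    (hreg : ∀ s ∈ Set.Icc a b, ¬ (deriv γ₁ s = 0 ∧ deriv γ₂ s = 0 ∧ deriv γ₃ s = 0))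
    (hSurf : ∀ s ∈ Set.Icc a b, u (γ₁ s) (γ₂ s) (γ₃ s) = 0)
    (hω : ∀ s, ω s = deriv γ₃ s + (1/2) * (γ₂ s * deriv γ₁ s - γ₁ s * deriv γ₂ s))
    (hp : ∀ s, p s = deriv (fun x => u x (γ₂ s) (γ₃ s)) (γ₁ s)
        - (γ₂ s / 2) * deriv (fun z => u (γ₁ s) (γ₂ s) z) (γ₃ s))
    (hq : ∀ s, q s = deriv (fun y => u (γ₁ s) y (γ₃ s)) (γ₂ s)
        + (γ₁ s / 2) * deriv (fun z => u (γ₁ s) (γ₂ s) z) (γ₃ s))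
    (huz : ∀ s, uz s = deriv (fun z => u (γ₁ s) (γ₂ s) z) (γ₃ s))
    (hl : ∀ s, lf s = Real.sqrt (p s ^ 2 + q s ^ 2))
    (hnc : ∀ s ∈ Set.Icc a b, lf s ≠ 0)
    (hpbar : ∀ s, pbar s = p s / lf s)
    (hqbar : ∀ s, qbar s = q s / lf s)
    (hrr : ∀ L s, rr L s = uz s / Real.sqrt L)
    (hlL : ∀ L s, lL L s = Real.sqrt (p s ^ 2 + q s ^ 2 + rr L s ^ 2))
    (hrbar : ∀ L s, rbar L s = rr L s / lL L s)
    (hc1 : ∀ s, c1 s = qbar s * deriv γ₁ s - pbar s * deriv γ₂ s)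
    (hc2 : ∀ L s, c2 L s = rbar L s * (pbar s * deriv γ₁ s + qbar s * deriv γ₂ s)
        - (lf s / lL L s) * Real.sqrt L * ω s)
    (haa : ∀ L s, aa L s = qbar s * (deriv (deriv γ₁) s + L * ω s * deriv γ₂ s / 2) - pbar s * (deriv (deriv γ₂) s - L * ω s * deriv γ₁ s / 2))
    (hbb : ∀ L s, bb L s = rbar L s * pbar s * (deriv (deriv γ₁) s + L * ω s * deriv γ₂ s / 2) + rbar L s * qbar s * (deriv (deriv γ₂) s - L * ω s * deriv γ₁ s / 2) - (lf s / lL L s) * Real.sqrt L * deriv ω s)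
    (hk : ∀ L s, k L s = Real.sqrt ((aa L s ^ 2 + bb L s ^ 2) / ((deriv γ₁ s)^2 + (deriv γ₂ s)^2 + L * (ω s)^2)^2 - (aa L s * c1 s + bb L s * c2 L s)^2 / ((deriv γ₁ s)^2 + (deriv γ₂ s)^2 + L * (ω s)^2)^3))
    (h0 : ω t ≠ 0) :
    Filter.Tendsto (fun L => k L t) Filter.atTop
      (nhds (|pbar t * deriv γ₁ t + qbar t * deriv γ₂ t| / (2 * |ω t|))) := by
  have hnct := hnc t ht
  have hl0pos : 0 < lf t := lt_of_le_of_ne (hl t ▸ Real.sqrt_nonneg _) (Ne.symm hnct)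
  have hl0sq : lf t ^ 2 = p t ^ 2 + q t ^ 2 := by
    rw [hl]; exact Real.sq_sqrt (by positivity)
  have hw2 : (0:ℝ) < ω t ^ 2 := lt_of_le_of_ne (sq_nonneg _) (Ne.symm (pow_ne_zero 2 h0))
  have htend := (svk_aux (qbar t * deriv (deriv γ₁) t - pbar t * deriv (deriv γ₂) t)
      (ω t * (qbar t * deriv γ₂ t + pbar t * deriv γ₁ t) / 2) (c1 t)
      (uz t * (pbar t * deriv (deriv γ₁) t + qbar t * deriv (deriv γ₂) t))
      (ω t * uz t * (pbar t * deriv γ₂ t - qbar t * deriv γ₁ t) / 2 - lf t * deriv ω t)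
      (lf t ^ 2) (uz t ^ 2) (ω t ^ 2) ((deriv γ₁ t)^2 + (deriv γ₂ t)^2)
      (-(lf t * ω t)) (uz t * (pbar t * deriv γ₁ t + qbar t * deriv γ₂ t))
      (pow_ne_zero 2 hl0pos.ne') hw2.ne').comp tendsto_inv_atTop_zero
  have hsq := Real.continuous_sqrt.continuousAt.tendsto.comp htend
  have hval : Real.sqrt ((ω t * (qbar t * deriv γ₂ t + pbar t * deriv γ₁ t) / 2) ^ 2 / (ω t ^ 2) ^ 2)
      = |pbar t * deriv γ₁ t + qbar t * deriv γ₂ t| / (2 * |ω t|) := by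
    rw [show (ω t * (qbar t * deriv γ₂ t + pbar t * deriv γ₁ t) / 2) ^ 2 / (ω t ^ 2) ^ 2
        = ((pbar t * deriv γ₁ t + qbar t * deriv γ₂ t) / (2 * ω t)) ^ 2 by
      field_simp; ring]
    rw [Real.sqrt_sq_eq_abs, abs_div, abs_mul, abs_two]
  rw [hval] at hsq
  refine Filter.Tendsto.congr' ?_ hsq
  filter_upwards [eventually_gt_atTop (0:ℝ)] with L hL
  simp only [Function.comp_apply]
  rw [hk L t]
  -- notation
  have hLne := hL.ne'
  have hσpos : 0 < Real.sqrt L := Real.sqrt_pos.2 hL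
  have hσ2 : Real.sqrt L ^ 2 = L := Real.sq_sqrt hL.le
  have hbbt := hbb L t
  have hc2t := hc2 L t
  have hrbart := hrbar L t
  have hrrt := hrr L t
  have hlLt := hlL L t
  set σ := Real.sqrt L with hσdef
  set lam := lL L t with hlamdef
  have hσne := hσpos.ne'
  have hrr2 : rr L t ^ 2 = uz t ^ 2 / L := by rw [hrrt, div_pow, hσ2]
  have hlam2 : lam ^ 2 = lf t ^ 2 + uz t ^ 2 / L := by
    rw [hlLt, Real.sq_sqrt (by positivity), hrr2, ← hl0sq]
  have hlampos : 0 < lam := by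
    rw [hlLt]
    apply Real.sqrt_pos.2
    nlinarith [sq_nonneg (rr L t), pow_pos hl0pos 2, hl0sq]
  have hlamne := hlampos.ne'
  have hslne : σ * lam ≠ 0 := mul_ne_zero hσne hlamne
  have hsl2 : (σ * lam) ^ 2 = L * lf t ^ 2 + uz t ^ 2 := by
    rw [mul_pow, hσ2, hlam2]; field_simp
  have hbbσ : bb L t * (σ * lam)
      = uz t * (pbar t * deriv (deriv γ₁) t + qbar t * deriv (deriv γ₂) t)
        + L * (ω t * uz t * (pbar t * deriv γ₂ t - qbar t * deriv γ₁ t) / 2 - lf t * deriv ω t) := by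
    rw [hbbt, hrbart, hrrt, ← hσ2]; field_simp; ring
  have hc2σ : c2 L t * (σ * lam)
      = uz t * (pbar t * deriv γ₁ t + qbar t * deriv γ₂ t) - L * (lf t * ω t) := by
    rw [hc2t, hrbart, hrrt, ← hσ2]; field_simp
  have hbbe := (eq_div_iff hslne).mpr hbbσ
  have hc2e := (eq_div_iff hslne).mpr hc2σ
  have hbb2 : bb L t ^ 2
      = (uz t * (pbar t * deriv (deriv γ₁) t + qbar t * deriv (deriv γ₂) t)
        + L * (ω t * uz t * (pbar t * deriv γ₂ t - qbar t * deriv γ₁ t) / 2 - lf t * deriv ω t)) ^ 2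
        / (L * lf t ^ 2 + uz t ^ 2) := by
    rw [hbbe, div_pow, hsl2]
  have hbc : bb L t * c2 L t
      = (uz t * (pbar t * deriv (deriv γ₁) t + qbar t * deriv (deriv γ₂) t)
        + L * (ω t * uz t * (pbar t * deriv γ₂ t - qbar t * deriv γ₁ t) / 2 - lf t * deriv ω t))
        * (uz t * (pbar t * deriv γ₁ t + qbar t * deriv γ₂ t) - L * (lf t * ω t))
        / (L * lf t ^ 2 + uz t ^ 2) := by
    rw [hbbe, hc2e, div_mul_div_comm,
      show (σ * lam) * (σ * lam) = L * lf t ^ 2 + uz t ^ 2 by rw [← hsl2]; ring]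
  congr 1
  rw [hbb2, hbc, haa L t]
  have hDne : L * lf t ^ 2 + uz t ^ 2 ≠ 0 := by
    have : 0 < L * lf t ^ 2 + uz t ^ 2 := by
      nlinarith [mul_pos hL (pow_pos hl0pos 2), sq_nonneg (uz t)]
    exact this.ne'
  have hd4 : deriv γ₁ t ^ 2 + deriv γ₂ t ^ 2 + L * ω t ^ 2 ≠ 0 := by
    have : 0 < deriv γ₁ t ^ 2 + deriv γ₂ t ^ 2 + L * ω t ^ 2 := by
      nlinarith [mul_pos hL hw2, sq_nonneg (deriv γ₁ t), sq_nonneg (deriv γ₂ t)]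
    exact this.ne'
  have r1 : (qbar t * deriv (deriv γ₁) t - pbar t * deriv (deriv γ₂) t) * L⁻¹
      + ω t * (qbar t * deriv γ₂ t + pbar t * deriv γ₁ t) / 2
      = (qbar t * (deriv (deriv γ₁) t + L * ω t * deriv γ₂ t / 2)
        - pbar t * (deriv (deriv γ₂) t - L * ω t * deriv γ₁ t / 2)) * L⁻¹ := by
    field_simp; ring
  have r2 : uz t * (pbar t * deriv (deriv γ₁) t + qbar t * deriv (deriv γ₂) t) * L⁻¹
      + (ω t * uz t * (pbar t * deriv γ₂ t - qbar t * deriv γ₁ t) / 2 - lf t * deriv ω t)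
      = (uz t * (pbar t * deriv (deriv γ₁) t + qbar t * deriv (deriv γ₂) t)
        + L * (ω t * uz t * (pbar t * deriv γ₂ t - qbar t * deriv γ₁ t) / 2 - lf t * deriv ω t)) * L⁻¹ := by
    field_simp
  have r3 : -(lf t * ω t) + uz t * (pbar t * deriv γ₁ t + qbar t * deriv γ₂ t) * L⁻¹
      = (uz t * (pbar t * deriv γ₁ t + qbar t * deriv γ₂ t) - L * (lf t * ω t)) * L⁻¹ := by
    field_simp; ring
  have r4 : lf t ^ 2 + uz t ^ 2 * L⁻¹ = (L * lf t ^ 2 + uz t ^ 2) * L⁻¹ := by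
    field_simp
  have r5 : ω t ^ 2 + (deriv γ₁ t ^ 2 + deriv γ₂ t ^ 2) * L⁻¹
      = (deriv γ₁ t ^ 2 + deriv γ₂ t ^ 2 + L * ω t ^ 2) * L⁻¹ := by
    field_simp; ring
  rw [r1, r2, r3, r4, r5]
  generalize hX : qbar t * (deriv (deriv γ₁) t + L * ω t * deriv γ₂ t / 2)
      - pbar t * (deriv (deriv γ₂) t - L * ω t * deriv γ₁ t / 2) = X
  generalize hY : uz t * (pbar t * deriv (deriv γ₁) t + qbar t * deriv (deriv γ₂) t)
      + L * (ω t * uz t * (pbar t * deriv γ₂ t - qbar t * deriv γ₁ t) / 2 - lf t * deriv ω t) = Y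
  generalize hZ : uz t * (pbar t * deriv γ₁ t + qbar t * deriv γ₂ t) - L * (lf t * ω t) = Z
  generalize hW : L * lf t ^ 2 + uz t ^ 2 = W at hDne
  generalize hV : deriv γ₁ t ^ 2 + deriv γ₂ t ^ 2 + L * ω t ^ 2 = V at hd4
  generalize hC : c1 t = C
  field_simp
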